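/- arXiv:1501.01517 — 5 statements merged into one kernel-verified Lean document; each statement's English description precedes it below -/
import Mathlib

section
/- For nonnegative reals x, y, z, the polynomial P(x,y,z) = 5(x³+y³+z³) − 5(x²y+xy²+x²z+xz²+y²z+yz²) + 18xyz equals zero if and only if (x=0 and y=z) or (y=0 and x=z) or (z=0 and x=y). -/
theorem stmt_1 (x y z : ℝ) (hx : 0 ≤ x) (hy : 0 ≤ y) (hz : 0 ≤ z) :
    5*(x^3 + y^3 + z^3)
      - 5*(x^2*y + x*y^2 + x^2*z + x*z^2 + y^2*z + y*z^2) + 18*x*y*z = 0 ↔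
    (x = 0 ∧ y = z) ∨ (y = 0 ∧ x = z) ∨ (z = 0 ∧ x = y) := by
  constructor
  · intro h
    -- Schur's inequality: x(x-y)(x-z)+y(y-x)(y-z)+z(z-x)(z-y) ≥ 0
    have schur : 0 ≤ x^3 + y^3 + z^3 - (x^2*y + x*y^2 + x^2*z + x*z^2 + y^2*z + y*z^2) + 3*x*y*z := by
      nlinarith [mul_nonneg hx (sq_nonneg (x-y)), mul_nonneg hy (sq_nonneg (y-z)),
        mul_nonneg hz (sq_nonneg (z-x)), mul_nonneg hx (sq_nonneg (x-z)),
        mul_nonneg hy (sq_nonneg (x-y)), mul_nonneg hz (sq_nonneg (y-z)),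
        mul_nonneg (mul_nonneg hx hy) hz]
    have hxyz : x * y * z = 0 := by nlinarith [mul_nonneg (mul_nonneg hx hy) hz]
    have hschur0 : x^3 + y^3 + z^3 - (x^2*y + x*y^2 + x^2*z + x*z^2 + y^2*z + y*z^2) + 3*x*y*z = 0 := by
      nlinarith
    rcases mul_eq_zero.mp hxyz with hxy | hz0
    · rcases mul_eq_zero.mp hxy with hx0 | hy0
      · left
        refine ⟨hx0, ?_⟩
        subst hx0
        have h2 : (y + z) * (y - z)^2 = 0 := by nlinarith
        rcases mul_eq_zero.mp h2 with h3 | h3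
        · nlinarith
        · nlinarith [sq_nonneg (y - z)]
      · right; left
        refine ⟨hy0, ?_⟩
        subst hy0
        have h2 : (x + z) * (x - z)^2 = 0 := by nlinarith
        rcases mul_eq_zero.mp h2 with h3 | h3
        · nlinarith
        · nlinarith [sq_nonneg (x - z)]
    · right; right
      refine ⟨hz0, ?_⟩
      subst hz0
      have h2 : (x + y) * (x - y)^2 = 0 := by nlinarith
      rcases mul_eq_zero.mp h2 with h3 | h3
      · nlinarith
      · nlinarith [sq_nonneg (x - y)]
  · rintro (⟨h1, h2⟩ | ⟨h1, h2⟩ | ⟨h1, h2⟩) <;> subst h1 <;> subst h2 <;> ring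
end

section
/- Let μ₁, μ₂, μ₃ be nonnegative reals and set R = μ₁+μ₂+μ₃, S = μ₁²+μ₂²+μ₃², C = μ₁³+μ₂³+μ₃³. Then 4C − (7/2)RS + (3/4)R³ = 0 if and only if, up to permutation, one of the μᵢ is zero and the other two are equal (each equal to R/2). -/
lemma schur (a b c : ℝ) (ha : 0 ≤ a) (hb : 0 ≤ b) (hc : 0 ≤ c) :
    0 ≤ a^3+b^3+c^3+3*a*b*c - (a^2*b+a^2*c+b^2*a+b^2*c+c^2*a+c^2*b) := by
  rcases le_total a b with hab | hab <;> rcases le_total b c with hbc | hbc <;>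
    rcases le_total a c with hac | hac <;>
  nlinarith [mul_nonneg (mul_nonneg ha ha) hb, sq_nonneg (a-b), sq_nonneg (b-c), sq_nonneg (a-c),
    mul_nonneg ha (sq_nonneg (b-c)), mul_nonneg hb (sq_nonneg (a-c)), mul_nonneg hc (sq_nonneg (a-b)),
    mul_nonneg (sub_nonneg.2 hab) (sq_nonneg (b-c)), mul_nonneg (sub_nonneg.2 hbc) (sq_nonneg (a-b))]

lemma pair_eq (a b : ℝ) (ha : 0 ≤ a) (hb : 0 ≤ b) (h : (a-b)^2*(a+b) = 0) : a = b := by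
  rcases mul_eq_zero.1 h with h' | h'
  · have := pow_eq_zero_iff (n := 2) (by norm_num) |>.1 h'
    linarith
  · linarith

theorem stmt_5 (μ₁ μ₂ μ₃ : ℝ) (h₁ : 0 ≤ μ₁) (h₂ : 0 ≤ μ₂) (h₃ : 0 ≤ μ₃) :
    4*(μ₁^3 + μ₂^3 + μ₃^3)
      - (7/2)*(μ₁ + μ₂ + μ₃)*(μ₁^2 + μ₂^2 + μ₃^2)
      + (3/4)*(μ₁ + μ₂ + μ₃)^3 = 0 ↔
    (μ₁ = 0 ∧ μ₂ = μ₃ ∧ μ₂ = (μ₁ + μ₂ + μ₃)/2) ∨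
    (μ₂ = 0 ∧ μ₁ = μ₃ ∧ μ₁ = (μ₁ + μ₂ + μ₃)/2) ∨
    (μ₃ = 0 ∧ μ₁ = μ₂ ∧ μ₁ = (μ₁ + μ₂ + μ₃)/2) := by
  constructor
  · intro h
    have hs := schur μ₁ μ₂ μ₃ h₁ h₂ h₃
    have habc : μ₁*μ₂*μ₃ = 0 := by
      have hp : 0 ≤ μ₁*μ₂*μ₃ := by positivity
      nlinarith
    rcases mul_eq_zero.1 habc with h' | h3
    rcases mul_eq_zero.1 h' with h1 | h2
    · left
      have : (μ₂-μ₃)^2*(μ₂+μ₃) = 0 := by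
        rw [h1] at h; linear_combination (4/5)*h
      have he := pair_eq _ _ h₂ h₃ this
      exact ⟨h1, he, by rw [h1]; linarith⟩
    · right; left
      have : (μ₁-μ₃)^2*(μ₁+μ₃) = 0 := by
        rw [h2] at h; linear_combination (4/5)*h
      have he := pair_eq _ _ h₁ h₃ this
      exact ⟨h2, he, by rw [h2] at *; linarith⟩
    · right; right
      have : (μ₁-μ₂)^2*(μ₁+μ₂) = 0 := by
        rw [h3] at h; linear_combination (4/5)*h
      have he := pair_eq _ _ h₁ h₂ this
      exact ⟨h3, he, by rw [h3] at *; linarith⟩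
  · rintro (⟨h0, he, _⟩ | ⟨h0, he, _⟩ | ⟨h0, he, _⟩) <;> subst h0 <;> subst he <;> ring
end

section
/- Let n ≥ 3, let λ₁,…,λₙ be reals with ∑λₖ = 0, and let σ_{ij} ≥ 0 for all i < j be nonnegative reals. Set R = 2∑_{i<j} σ_{ij}. Then ∑_{i<j} (2λᵢλⱼ − ((n−2)/n)∑ₖλₖ²) σ_{ij} ≤ −((n−1)/n) ∑_{i<j} (λᵢ−λⱼ)² σ_{ij} ≤ 0. -/
lemma key_coeff (n : ℕ) (hn : 3 ≤ n) (l : Fin n → ℝ) (hsum : ∑ k, l k = 0)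
    (i j : Fin n) (hij : i ≠ j) :
    2 * l i * l j - (((n : ℝ) - 2)/n) * ∑ k, (l k)^2 ≤
      -(((n : ℝ) - 1)/n) * (l i - l j)^2 := by
  set s : Finset (Fin n) := (Finset.univ.erase i).erase j with hs
  have hjmem : j ∈ Finset.univ.erase i := Finset.mem_erase.2 ⟨hij.symm, Finset.mem_univ j⟩
  have hcard : (s.card : ℝ) = (n : ℝ) - 2 := by
    have : s.card = n - 2 := by
      rw [hs, Finset.card_erase_of_mem hjmem, Finset.card_erase_of_mem (Finset.mem_univ i),
        Finset.card_univ, Fintype.card_fin]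
      omega
    rw [this]
    have : 2 ≤ n := by omega
    push_cast [Nat.cast_sub this]
    ring
  have hsplit : ∀ f : Fin n → ℝ, ∑ k, f k = f i + f j + ∑ k ∈ s, f k := by
    intro f
    rw [← Finset.sum_erase_add _ _ (Finset.mem_univ i), ← Finset.sum_erase_add _ _ hjmem]
    ring
  have hab : l i + l j = -∑ k ∈ s, l k := by
    have := hsplit l; rw [hsum] at this; linarith
  have hS : ∑ k, (l k)^2 = (l i)^2 + (l j)^2 + ∑ k ∈ s, (l k)^2 :=
    hsplit (fun k => (l k)^2)
  have hCS : (l i + l j)^2 ≤ ((n : ℝ) - 2) * ∑ k ∈ s, (l k)^2 := by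
    have h := sq_sum_le_card_mul_sum_sq (s := s) (f := l)
    rw [hab]
    calc (-∑ k ∈ s, l k)^2 = (∑ k ∈ s, l k)^2 := by ring
      _ ≤ (s.card : ℝ) * ∑ k ∈ s, (l k)^2 := by exact_mod_cast h
      _ = ((n : ℝ) - 2) * ∑ k ∈ s, (l k)^2 := by rw [hcard]
  have hn0 : (0 : ℝ) < n := by positivity
  have hnum : (n : ℝ) * (2 * l i * l j) - ((n : ℝ) - 2) * ∑ k, (l k)^2
      + ((n : ℝ) - 1) * (l i - l j)^2 ≤ 0 := by
    have hid : (n : ℝ) * (2 * l i * l j) - ((n : ℝ) - 2) * ∑ k, (l k)^2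
        + ((n : ℝ) - 1) * (l i - l j)^2
        = (l i + l j)^2 - ((n : ℝ) - 2) * ∑ k ∈ s, (l k)^2 := by
      rw [hS]; ring
    linarith [hCS, hid.le, hid.ge]
  have hdiff : (2 * l i * l j - (((n : ℝ) - 2)/n) * ∑ k, (l k)^2)
      - (-(((n : ℝ) - 1)/n) * (l i - l j)^2)
      = ((n : ℝ) * (2 * l i * l j) - ((n : ℝ) - 2) * ∑ k, (l k)^2
        + ((n : ℝ) - 1) * (l i - l j)^2) / n := by
    field_simp
    ring
  have := div_nonpos_of_nonpos_of_nonneg hnum hn0.le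
  linarith [hdiff.le, hdiff.ge]

theorem stmt_8 (n : ℕ) (hn : 3 ≤ n) (l : Fin n → ℝ) (σ : Fin n → Fin n → ℝ)
    (hsum : ∑ k, l k = 0)
    (hσ : ∀ i j : Fin n, i < j → 0 ≤ σ i j) :
    (∑ p ∈ Finset.univ.filter (fun p : Fin n × Fin n => p.1 < p.2),
        (2 * l p.1 * l p.2 - (((n : ℝ) - 2)/n) * ∑ k, (l k)^2) * σ p.1 p.2) ≤
      -(((n : ℝ) - 1)/n) *
        ∑ p ∈ Finset.univ.filter (fun p : Fin n × Fin n => p.1 < p.2),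
          (l p.1 - l p.2)^2 * σ p.1 p.2 ∧
    -(((n : ℝ) - 1)/n) *
        (∑ p ∈ Finset.univ.filter (fun p : Fin n × Fin n => p.1 < p.2),
          (l p.1 - l p.2)^2 * σ p.1 p.2) ≤ 0 := by
  have hn0 : (0 : ℝ) < n := by positivity
  have hc : 0 ≤ ((n : ℝ) - 1)/n := by
    apply div_nonneg _ hn0.le
    have : (3 : ℝ) ≤ n := by exact_mod_cast hn
    linarith
  have hsumpos : 0 ≤ ∑ p ∈ Finset.univ.filter (fun p : Fin n × Fin n => p.1 < p.2),
      (l p.1 - l p.2)^2 * σ p.1 p.2 := by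
    apply Finset.sum_nonneg
    intro p hp
    exact mul_nonneg (sq_nonneg _) (hσ p.1 p.2 (Finset.mem_filter.1 hp).2)
  constructor
  · conv_rhs => rw [Finset.mul_sum]
    apply Finset.sum_le_sum
    intro p hp
    have hlt := (Finset.mem_filter.1 hp).2
    calc (2 * l p.1 * l p.2 - (((n : ℝ) - 2)/n) * ∑ k, (l k)^2) * σ p.1 p.2
        ≤ (-(((n : ℝ) - 1)/n) * (l p.1 - l p.2)^2) * σ p.1 p.2 :=
          mul_le_mul_of_nonneg_right (key_coeff n hn l hsum p.1 p.2 hlt.ne) (hσ p.1 p.2 hlt)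
      _ = -(((n : ℝ) - 1)/n) * ((l p.1 - l p.2)^2 * σ p.1 p.2) := by ring
  · have := mul_nonneg hc hsumpos
    linarith
end

section
/- Let n ≥ 3 and let μ₁,…,μₙ be nonnegative reals (eigenvalues of a Ricci tensor with nonnegative sectional curvature written as μᵢ = ∑_{j≠i} σ_{ij} with σ_{ij} = σ_{ji} ≥ 0). Then ∑ᵢ μᵢ² ≤ (1/2)(∑ᵢ μᵢ)². -/
theorem stmt_9 (n : ℕ) (hn : 3 ≤ n) (σ : Fin n → Fin n → ℝ)
    (hsymm : ∀ i j, σ i j = σ j i)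
    (hnonneg : ∀ i j, i ≠ j → 0 ≤ σ i j)
    (μ : Fin n → ℝ) (hμ : ∀ i, μ i = ∑ j ∈ Finset.univ.erase i, σ i j) :
    ∑ i, (μ i)^2 ≤ (1/2) * (∑ i, μ i)^2 := by
  have hμnn : ∀ i, 0 ≤ μ i := by
    intro i
    rw [hμ i]
    exact Finset.sum_nonneg fun j hj =>
      hnonneg i j (Ne.symm (Finset.ne_of_mem_erase hj))
  have key : ∀ i, μ i ≤ ∑ k ∈ Finset.univ.erase i, μ k := by
    intro i
    rw [hμ i]
    apply Finset.sum_le_sum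
    intro k hk
    have hki : k ≠ i := Finset.ne_of_mem_erase hk
    have : σ i k = σ k i := hsymm i k
    rw [this, hμ k]
    exact Finset.single_le_sum
      (fun j hj => hnonneg k j (Ne.symm (Finset.ne_of_mem_erase hj)))
      (Finset.mem_erase.mpr ⟨Ne.symm hki, Finset.mem_univ i⟩)
  have key2 : ∀ i : Fin n, 2 * μ i ≤ ∑ k, μ k := by
    intro i
    have := key i
    have hsum : ∑ k, μ k = μ i + ∑ k ∈ Finset.univ.erase i, μ k :=
      (Finset.add_sum_erase _ _ (Finset.mem_univ i)).symm
    linarith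
  calc ∑ i, (μ i)^2 ≤ ∑ i, μ i * ((∑ k, μ k) / 2) := by
        apply Finset.sum_le_sum
        intro i _
        have h1 := key2 i
        have h2 := hμnn i
        nlinarith
    _ = (1/2) * (∑ i, μ i)^2 := by
        rw [← Finset.sum_mul]
        ring
end

section
/- Let σ₁₂, σ₁₃, σ₂₃ ≥ 0 be the sectional curvatures of a 3-dimensional Riemannian manifold in an orthonormal frame diagonalizing Ricci, so that the Ricci eigenvalues are μ₁ = σ₁₂+σ₁₃, μ₂ = σ₁₂+σ₂₃, μ₃ = σ₁₃+σ₂₃. Then 4∑μᵢ³ − (7/2)(∑μᵢ)(∑μᵢ²) + (3/4)(∑μᵢ)³ ≥ 3μ₁μ₂μ₃ /4 · 4 ≥ 0, i.e. 4(μ₁³+μ₂³+μ₃³) − (7/2)R·S + (3/4)R³ ≥ 3μ₁μ₂μ₃ where R = ∑μᵢ, S = ∑μᵢ². -/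
/-- In dimension three, with Ricci eigenvalues `μᵢ = σᵢⱼ + σᵢₖ` built from nonnegative
sectional curvatures, the cubic quantity `P = 4∑μᵢ³ − (7/2)RS + (3/4)R³` satisfies
`4P ≥ 3μ₁μ₂μ₃ ≥ 0`. -/
theorem stmt_19 (σ₁₂ σ₁₃ σ₂₃ : ℝ)
    (h₁₂ : 0 ≤ σ₁₂) (h₁₃ : 0 ≤ σ₁₃) (h₂₃ : 0 ≤ σ₂₃)
    (μ₁ μ₂ μ₃ : ℝ)
    (hμ₁ : μ₁ = σ₁₂ + σ₁₃) (hμ₂ : μ₂ = σ₁₂ + σ₂₃) (hμ₃ : μ₃ = σ₁₃ + σ₂₃) :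
    3*μ₁*μ₂*μ₃ ≤ 4*(4*(μ₁^3 + μ₂^3 + μ₃^3)
      - (7/2)*(μ₁ + μ₂ + μ₃)*(μ₁^2 + μ₂^2 + μ₃^2)
      + (3/4)*(μ₁ + μ₂ + μ₃)^3) ∧
    0 ≤ 3*μ₁*μ₂*μ₃ := by
  subst hμ₁ hμ₂ hμ₃
  constructor
  · nlinarith [sq_nonneg (σ₁₂-σ₁₃), sq_nonneg (σ₁₂-σ₂₃), sq_nonneg (σ₁₃-σ₂₃), sq_nonneg (σ₁₂+σ₁₃+σ₂₃), mul_nonneg h₁₂ h₁₃, mul_nonneg h₁₂ h₂₃, mul_nonneg h₁₃ h₂₃, mul_nonneg (mul_nonneg h₁₂ h₁₃) h₂₃, mul_nonneg (mul_nonneg h₁₂ h₁₂) h₁₂, mul_nonneg (mul_nonneg h₁₃ h₁₃) h₁₃, mul_nonneg (mul_nonneg h₂₃ h₂₃) h₂₃, mul_nonneg h₁₂ (sq_nonneg (σ₁₃-σ₂₃)), mul_nonneg h₁₃ (sq_nonneg (σ₁₂-σ₂₃)), mul_nonneg h₂₃ (sq_nonneg (σ₁₂-σ₁₃))]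
  · positivity
end
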